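/- arXiv:1210.2587 — 2 statements merged into one kernel-verified Lean document; each statement's English description precedes it below -/
import Mathlib

section
/- For every integer k ≥ 4, setting n = ⌈f(k)⌉ where f(k) = 1 + (ln(k²−1) − ln k)/(ln(k−1) − ln(k−2)), one has D(n,j−1) < D(n,j) for every integer j with 2 ≤ j ≤ k, and consequently M_n ≥ k. -/
/-!
Inclusion–exclusion over the vertices a walk misses gives
`D (N + 1) j = ∑ i, (-1) ^ i * C(j, i) * (j - i) * (j - i - 1) ^ N`. When
`m * (m - 1) ^ N ≤ m ^ N` for all `m < j`, the `i`-th term is at least `i + 1` times the next one,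
so `D (N + 1) j` is at least the sum of its first four terms, the last two adding a positive
amount when `j ≥ 4`. On the other hand `D (N + 1) (j - 1)` is at most the number
`(j - 1) * (j - 2) ^ N` of all walks in `K_{j-1}`, and the first two terms exceed it as soon as
`(j + 1) * (j - 1) * (j - 2) ^ N ≤ j * (j - 1) ^ N`, i.e. `(j² - 1) / j ≤ ((j - 1) / (j - 2)) ^ N`.
Since the left side increases and the base on the right decreases in `j`, this holds for all
`3 ≤ j ≤ k` once it holds at `j = k`, where it is the inequality `f k ≤ N + 1` with the
logarithms removed. Taken at `j = m + 1`, it also yields `m * (m - 1) ^ N ≤ m ^ N`.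
-/

namespace PaperStmt

/-- `w : Fin n → V` is a walk of length `n - 1` in the simple graph `G`:
a sequence of `n` vertices in which consecutive vertices are adjacent. -/
def IsWalk {V : Type*} (G : SimpleGraph V) {n : ℕ} (w : Fin n → V) : Prop :=
  ∀ (i : ℕ) (h : i + 1 < n), G.Adj (w ⟨i, Nat.lt_of_succ_lt h⟩) (w ⟨i + 1, h⟩)

/-- `Y n G` is the number of walks of length `n - 1` in `G` that visit every
vertex of `G` at least once. -/
noncomputable def Y {V : Type*} [Fintype V] (n : ℕ) (G : SimpleGraph V) : ℕ :=
  Nat.card {w : Fin n → V // IsWalk G w ∧ Function.Surjective w}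

/-- `D n k = Y n K_k`, where `K_k` is the complete graph on `k` vertices. -/
noncomputable def D (n k : ℕ) : ℕ :=
  Y n (⊤ : SimpleGraph (Fin k))

/-- `M n` is the least `k` in `{0, …, n}` such that `D n k = max_{0 ≤ j ≤ n} D n j`. -/
noncomputable def M (n : ℕ) : ℕ :=
  sInf {k | k ≤ n ∧ D n k = (Finset.range (n + 1)).sup (fun j => D n j)}

/-- `f x = 1 + (ln(x² − 1) − ln x) / (ln(x − 1) − ln(x − 2))`. -/
noncomputable def f (x : ℝ) : ℝ :=
  1 + (Real.log (x ^ 2 - 1) - Real.log x) / (Real.log (x - 1) - Real.log (x - 2))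

open Finset Filter Topology

section Walks

variable {V : Type*} (G : SimpleGraph V)

lemma isWalk_snoc_iff {N : ℕ} (w : Fin (N + 1) → V) (v : V) :
    IsWalk G (Fin.snoc w v : Fin (N + 2) → V) ↔ IsWalk G w ∧ G.Adj (w (Fin.last N)) v := by
  constructor
  · intro h
    refine ⟨fun i hi => ?_, ?_⟩
    · have hiN : i < N := by omega
      simpa [Fin.snoc, hiN, hiN.le] using h i (by omega)
    · simpa [Fin.snoc, Fin.last] using h N (by omega)
  · rintro ⟨hw, hv⟩ i hi
    by_cases hiN : i < N
    · simpa [Fin.snoc, hiN, hiN.le] using hw i (by omega)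
    · obtain rfl : i = N := by omega
      simpa [Fin.snoc, Fin.last] using hv

def walkSnocEquiv (N : ℕ) :
    {w : Fin (N + 2) → V // IsWalk G w} ≃
      Σ p : {w : Fin (N + 1) → V // IsWalk G w}, G.neighborSet (p.1 (Fin.last N)) where
  toFun w :=
    have hw := (isWalk_snoc_iff G (Fin.init w.1) (w.1 (Fin.last _))).1
      (by rw [Fin.snoc_init_self]; exact w.2)
    ⟨⟨Fin.init w.1, hw.1⟩, ⟨w.1 (Fin.last _), hw.2⟩⟩
  invFun p := ⟨Fin.snoc p.1.1 p.2.1, (isWalk_snoc_iff G _ _).2 ⟨p.1.2, p.2.2⟩⟩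
  left_inv w := Subtype.ext (Fin.snoc_init_self w.1)
  right_inv := by
    rintro ⟨⟨w, hw⟩, ⟨v, hv⟩⟩
    ext <;> simp

theorem card_isWalk_of_isRegularOfDegree [Fintype V] [DecidableRel G.Adj] {d : ℕ}
    (hG : G.IsRegularOfDegree d) (N : ℕ) :
    Nat.card {w : Fin (N + 1) → V // IsWalk G w} = Fintype.card V * d ^ N := by
  induction N with
  | zero =>
    rw [Nat.card_congr (Equiv.subtypeUnivEquiv (p := IsWalk G) fun w i hi => by omega),
      Nat.card_congr (Equiv.funUnique (Fin 1) V)]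
    simp
  | succ N ih =>
    classical
    rw [Nat.card_congr (walkSnocEquiv G N), Nat.card_sigma]
    simp only [Nat.card_eq_fintype_card, G.card_neighborSet_eq_degree, hG.degree_eq]
    rw [sum_const, card_univ, ← Nat.card_eq_fintype_card, ih, smul_eq_mul, pow_succ]
    ring

def isWalkInduceEquiv (s : Set V) (n : ℕ) :
    {w : Fin n → V // IsWalk G w ∧ ∀ i, w i ∈ s} ≃ {w : Fin n → s // IsWalk (G.induce s) w} where
  toFun w := ⟨fun i => ⟨w.1 i, w.2.2 i⟩, fun i hi => w.2.1 i hi⟩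
  invFun w := ⟨fun i => w.1 i, fun i hi => w.2 i hi, fun i => (w.1 i).2⟩
  left_inv _ := rfl
  right_inv _ := rfl

theorem card_isWalk_top_avoiding [Fintype V] [DecidableEq V] (t : Finset V) (N : ℕ) :
    Nat.card {w : Fin (N + 1) → V // IsWalk ⊤ w ∧ ∀ i, w i ∉ t} =
      (Fintype.card V - #t) * (Fintype.card V - #t - 1) ^ N := by
  have htop : (⊤ : SimpleGraph V).induce (↑t)ᶜ = ⊤ := by ext; simp
  refine (Nat.card_congr (isWalkInduceEquiv ⊤ (↑t : Set V)ᶜ (N + 1))).trans ?_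
  rw [htop, card_isWalk_of_isRegularOfDegree _ SimpleGraph.IsRegularOfDegree.top,
    Fintype.card_compl_set]
  simp

lemma card_eq_natCard_isWalk_and [Fintype V] {n : ℕ} {p : (Fin n → V) → Prop}
    {s : Finset {w : Fin n → V // IsWalk G w}} (hs : ∀ w, w ∈ s ↔ p w.1) :
    #s = Nat.card {w : Fin n → V // IsWalk G w ∧ p w} := by
  classical
  rw [← Nat.card_congr (Equiv.subtypeSubtypeEquivSubtypeInter (IsWalk G) p),
    Nat.card_eq_fintype_card, Fintype.card_of_subtype s hs]

theorem Y_eq_sum_powerset [Fintype V] [DecidableEq V] (n : ℕ) :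
    (Y n G : ℤ) = ∑ t ∈ (univ : Finset V).powerset,
      (-1 : ℤ) ^ #t * Nat.card {w : Fin n → V // IsWalk G w ∧ ∀ i, w i ∉ t} := by
  classical
  let S : V → Finset {w : Fin n → V // IsWalk G w} := fun v => {w | ∀ i, w.1 i ≠ v}
  have h := inclusion_exclusion_card_inf_compl univ S
  rw [card_eq_natCard_isWalk_and G (p := Function.Surjective)
    (by simp [S, mem_inf, Function.Surjective])] at h
  rw [Y, h]
  refine sum_congr rfl fun t _ => ?_
  rw [card_eq_natCard_isWalk_and G (p := fun w => ∀ i, w i ∉ t) fun w => by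
    simp only [S, mem_inf, mem_filter, mem_univ, true_and]
    exact ⟨fun h i hi => h _ hi i rfl, fun h v hv i hi => h i (hi ▸ hv)⟩]

end Walks

def ieTerm (N j i : ℕ) : ℕ := j.choose i * ((j - i) * (j - i - 1) ^ N)

theorem D_succ_eq_sum (N j : ℕ) :
    (D (N + 1) j : ℤ) = ∑ i ∈ range (j + 1), (-1 : ℤ) ^ i * ieTerm N j i := by
  rw [D, Y_eq_sum_powerset]
  simp_rw [card_isWalk_top_avoiding, Fintype.card_fin]
  rw [sum_powerset_apply_card (fun m => (-1 : ℤ) ^ m * ((j - m) * (j - m - 1) ^ N : ℕ)),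
    card_univ, Fintype.card_fin]
  refine sum_congr rfl fun i _ => ?_
  simp only [ieTerm, nsmul_eq_mul]
  push_cast
  ring

section InclusionExclusionTerms

variable {N j : ℕ}

lemma succ_mul_ieTerm_succ_le {i : ℕ}
    (h : (j - i - 1) * (j - i - 2) ^ N ≤ (j - i - 1) ^ N) :
    (i + 1) * ieTerm N j (i + 1) ≤ ieTerm N j i := by
  unfold ieTerm
  rw [show j - (i + 1) = j - i - 1 by omega, show j - i - 1 - 1 = j - i - 2 by omega]
  calc (i + 1) * (j.choose (i + 1) * ((j - i - 1) * (j - i - 2) ^ N))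
      = j.choose i * (j - i) * ((j - i - 1) * (j - i - 2) ^ N) := by
        rw [← Nat.choose_succ_right_eq]; ring
    _ ≤ j.choose i * (j - i) * (j - i - 1) ^ N := by gcongr
    _ = j.choose i * ((j - i) * (j - i - 1) ^ N) := by ring

lemma ieTerm_eq_zero_of_lt {i : ℕ} (h : j < i) : ieTerm N j i = 0 := by
  simp [ieTerm, Nat.choose_eq_zero_of_lt h]

lemma antitone_ieTerm (h : ∀ m < j, m * (m - 1) ^ N ≤ m ^ N) : Antitone (ieTerm N j) := by
  refine antitone_nat_of_succ_le fun i => ?_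
  rcases lt_or_ge i j with hij | hij
  · have hm := h (j - i - 1) (by omega)
    rw [show j - i - 1 - 1 = j - i - 2 by omega] at hm
    exact (Nat.le_mul_of_pos_left _ i.succ_pos).trans (succ_mul_ieTerm_succ_le hm)
  · simp [ieTerm_eq_zero_of_lt (show j < i + 1 by omega)]

lemma tendsto_sum_ieTerm :
    Tendsto (fun m => ∑ i ∈ range m, (-1 : ℤ) ^ i * ieTerm N j i) atTop (𝓝 (D (N + 1) j)) := by
  rw [D_succ_eq_sum]
  exact tendsto_atTop_of_eventually_const fun m hm =>
    eventually_constant_sum (fun i hi => by simp [ieTerm_eq_zero_of_lt (show j < i by omega)]) hm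

lemma ieTerm_alternating_le_D (h : ∀ m < j, m * (m - 1) ^ N ≤ m ^ N) :
    (ieTerm N j 0 : ℤ) - ieTerm N j 1 + ieTerm N j 2 - ieTerm N j 3 ≤ D (N + 1) j := by
  have hanti : Antitone fun i => (ieTerm N j i : ℤ) :=
    fun a b hab => Nat.cast_le.2 (antitone_ieTerm h hab)
  simpa [sum_range_succ, sub_eq_add_neg] using
    hanti.alternating_series_le_tendsto tendsto_sum_ieTerm 2

end InclusionExclusionTerms

lemma Y_le_card_isWalk {V : Type*} [Fintype V] (G : SimpleGraph V) (n : ℕ) :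
    Y n G ≤ Nat.card {w : Fin n → V // IsWalk G w} :=
  Nat.card_le_card_of_injective (fun w => ⟨w.1, w.2.1⟩) fun _ _ h =>
    Subtype.ext (Subtype.mk.inj h)

lemma D_succ_le_mul_pow (N j : ℕ) : D (N + 1) j ≤ j * (j - 1) ^ N := by
  simpa [D, card_isWalk_of_isRegularOfDegree _ SimpleGraph.IsRegularOfDegree.top] using
    Y_le_card_isWalk (⊤ : SimpleGraph (Fin j)) (N + 1)

section SmallCases

variable {N : ℕ}

lemma D_succ_zero : D (N + 1) 0 = 0 := by
  simpa [ieTerm] using D_succ_eq_sum N 0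

lemma D_succ_one (hN : N ≠ 0) : D (N + 1) 1 = 0 := by
  simpa [ieTerm, sum_range_succ, hN] using D_succ_eq_sum N 1

lemma D_succ_two (hN : N ≠ 0) : D (N + 1) 2 = 2 :=
  (Nat.cast_inj (R := ℤ)).1 (by simpa [ieTerm, sum_range_succ, hN] using D_succ_eq_sum N 2)

lemma D_succ_three (hN : N ≠ 0) : (D (N + 1) 3 : ℤ) = 3 * 2 ^ N - 6 := by
  simp [D_succ_eq_sum, ieTerm, sum_range_succ, hN, sub_eq_add_neg]

end SmallCases

lemma mul_sub_one_pow_le_pow {m N : ℕ} (h : (m + 2) * m * (m - 1) ^ N ≤ (m + 1) * m ^ N) :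
    m * (m - 1) ^ N ≤ m ^ N := by
  refine Nat.le_of_mul_le_mul_left ?_ m.succ_pos
  calc (m + 1) * (m * (m - 1) ^ N) ≤ (m + 2) * m * (m - 1) ^ N := by
        rw [← mul_assoc]; gcongr; omega
    _ ≤ (m + 1) * m ^ N := h

theorem D_sub_one_lt_of_four_le {N j : ℕ} (hj : 4 ≤ j) (hm : ∀ m < j, m * (m - 1) ^ N ≤ m ^ N)
    (hj1 : (j + 1) * (j - 1) * (j - 2) ^ N ≤ j * (j - 1) ^ N) :
    D (N + 1) (j - 1) < D (N + 1) j := by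
  have hprev : D (N + 1) (j - 1) ≤ (j - 1) * (j - 2) ^ N := by
    simpa [Nat.sub_sub] using D_succ_le_mul_pow N (j - 1)
  have hlow := ieTerm_alternating_le_D hm
  have h01 : ieTerm N j 1 + (j - 1) * (j - 2) ^ N ≤ ieTerm N j 0 := by
    simp only [ieTerm, Nat.choose_zero_right, Nat.choose_one_right, Nat.sub_zero, Nat.sub_sub,
      one_mul]
    calc j * ((j - 1) * (j - 2) ^ N) + (j - 1) * (j - 2) ^ N
        = (j + 1) * (j - 1) * (j - 2) ^ N := by ring
      _ ≤ j * (j - 1) ^ N := hj1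
  have h23 : 3 * ieTerm N j 3 ≤ ieTerm N j 2 :=
    succ_mul_ieTerm_succ_le (by simpa [Nat.sub_sub] using hm (j - 3) (by omega))
  have h2 : 0 < ieTerm N j 2 :=
    Nat.mul_pos (Nat.choose_pos (by omega)) (Nat.mul_pos (by omega) (pow_pos (by omega) _))
  zify at hprev h01 h23 h2
  linarith

theorem D_sub_one_lt_of_forall_le {N k : ℕ} (hk : 3 ≤ k)
    (h : ∀ j, 3 ≤ j → j ≤ k → (j + 1) * (j - 1) * (j - 2) ^ N ≤ j * (j - 1) ^ N)
    {j : ℕ} (hj : 2 ≤ j) (hjk : j ≤ k) : D (N + 1) (j - 1) < D (N + 1) j := by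
  have hN : 2 ≤ N := by
    have h3 := h 3 le_rfl hk
    by_contra! hN
    interval_cases N <;> simp at h3
  have hm : ∀ m < k, m * (m - 1) ^ N ≤ m ^ N := fun m hmk => by
    rcases Nat.lt_or_ge m 2 with hm2 | hm2
    · interval_cases m
      · simp
      · simpa using Nat.pow_le_pow_left (Nat.zero_le 1) N
    · exact mul_sub_one_pow_le_pow (by simpa using h (m + 1) (by omega) hmk)
  -- For `j ≤ 3` the four-term bound is not strict, so these two values are computed exactly.
  rcases (show j = 2 ∨ j = 3 ∨ 4 ≤ j by omega) with rfl | rfl | hj4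
  · rw [D_succ_one (by omega), D_succ_two (by omega)]
    omega
  · have h2N : (2 : ℤ) ^ 2 ≤ 2 ^ N := pow_le_pow_right₀ (by norm_num) hN
    zify
    rw [D_succ_two (by omega), D_succ_three (by omega)]
    push_cast
    linarith
  · exact D_sub_one_lt_of_four_le hj4 (fun m hmj => hm m (by omega)) (h j (by omega) hjk)

lemma le_of_D_pos {n k : ℕ} (h : 0 < D n k) : k ≤ n := by
  obtain ⟨w, -, hw⟩ := (Nat.card_pos_iff.1 h).1
  simpa using Fintype.card_le_of_surjective w hw

lemma le_M_of_forall_D_lt {n k : ℕ} (hkn : k ≤ n) (h : ∀ i < k, D n i < D n k) : k ≤ M n := by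
  obtain ⟨b, hb, hbmax⟩ := exists_mem_eq_sup (range (n + 1)) nonempty_range_add_one (D n)
  refine le_csInf ⟨b, Nat.lt_succ_iff.1 (mem_range.1 hb), hbmax.symm⟩ fun i ⟨_, hi⟩ => ?_
  by_contra! hik
  have : D n k ≤ D n i := hi ▸ le_sup (f := D n) (mem_range.2 (by omega))
  exact (h i hik).not_ge this

lemma D_lt_of_forall_sub_one_lt {N k : ℕ} (hk : 2 ≤ k)
    (h : ∀ j, 2 ≤ j → j ≤ k → D (N + 1) (j - 1) < D (N + 1) j) :
    ∀ i < k, D (N + 1) i < D (N + 1) k := by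
  have hmono : StrictMonoOn (D (N + 1)) (Set.Icc 1 k) :=
    strictMonoOn_of_lt_add_one Set.ordConnected_Icc fun a _ ha ha1 => by
      simpa using h (a + 1) (by have := ha.1; omega) ha1.2
  rintro (_ | i) hik
  · rw [D_succ_zero]
    exact (Nat.zero_le _).trans_lt (h k hk le_rfl)
  · exact hmono ⟨by omega, by omega⟩ ⟨by omega, le_rfl⟩ hik

section Analytic

variable {x y : ℝ} {N : ℕ}

lemma f_eq_one_add_log_div (hx : 2 < x) :
    f x = 1 + Real.log ((x ^ 2 - 1) / x) / Real.log ((x - 1) / (x - 2)) := by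
  rw [f, Real.log_div, Real.log_div] <;> nlinarith

lemma one_lt_f (hx : 3 ≤ x) : 1 < f x := by
  rw [f_eq_one_add_log_div (by linarith), lt_add_iff_pos_right]
  refine div_pos (Real.log_pos ?_) (Real.log_pos ?_)
  · rw [one_lt_div] <;> nlinarith
  · rw [one_lt_div] <;> linarith

lemma sq_sub_one_div_le_pow_of_f_le (hx : 3 ≤ x) (h : f x ≤ N + 1) :
    (x ^ 2 - 1) / x ≤ ((x - 1) / (x - 2)) ^ N := by
  have hr : 0 < Real.log ((x - 1) / (x - 2)) := Real.log_pos (by rw [one_lt_div] <;> linarith)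
  rw [f_eq_one_add_log_div (by linarith), add_comm, add_le_add_iff_right, div_le_iff₀ hr,
    ← Real.log_pow] at h
  exact (Real.log_le_log_iff (div_pos (by nlinarith) (by linarith))
    (pow_pos (div_pos (by linarith) (by linarith)) _)).1 h

lemma sq_sub_one_div_le_pow_of_le (hy : 3 ≤ y) (hyx : y ≤ x)
    (h : (x ^ 2 - 1) / x ≤ ((x - 1) / (x - 2)) ^ N) :
    (y ^ 2 - 1) / y ≤ ((y - 1) / (y - 2)) ^ N := by
  calc (y ^ 2 - 1) / y ≤ (x ^ 2 - 1) / x := by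
        rw [div_le_div_iff₀ (by linarith) (by linarith)]
        nlinarith [mul_nonneg (sub_nonneg.2 hyx) (show 0 ≤ x * y + 1 by nlinarith)]
    _ ≤ ((x - 1) / (x - 2)) ^ N := h
    _ ≤ ((y - 1) / (y - 2)) ^ N := by
        gcongr ?_ ^ N
        · exact div_nonneg (by linarith) (by linarith)
        · rw [div_le_div_iff₀ (by linarith) (by linarith)]; nlinarith

lemma mul_pow_le_mul_pow_of_sq_sub_one_div_le {j : ℕ} (hj : 3 ≤ j)
    (h : ((j : ℝ) ^ 2 - 1) / j ≤ (((j : ℝ) - 1) / ((j : ℝ) - 2)) ^ N) :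
    (j + 1) * (j - 1) * (j - 2) ^ N ≤ j * (j - 1) ^ N := by
  have hj' : (3 : ℝ) ≤ j := by exact_mod_cast hj
  rw [div_pow, div_le_div_iff₀ (by positivity) (pow_pos (by linarith) _)] at h
  rw [← Nat.cast_le (α := ℝ)]
  push_cast [Nat.cast_sub (show 1 ≤ j by omega), Nat.cast_sub (show 2 ≤ j by omega)]
  linarith

end Analytic

theorem D_strict_upto_k_of_ceil_f (k : ℕ) (hk : 4 ≤ k) (n : ℕ)
    (hn : (n : ℤ) = ⌈f k⌉) :
    (∀ j : ℕ, 2 ≤ j → j ≤ k → D n (j - 1) < D n j) ∧ k ≤ M n := by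
  have hk3 : (3 : ℝ) ≤ k := by exact_mod_cast (show 3 ≤ k by omega)
  have hfn : f k ≤ n := by exact_mod_cast hn ▸ Int.le_ceil (f k)
  obtain ⟨N, rfl⟩ : ∃ N, n = N + 1 :=
    Nat.exists_eq_succ_of_ne_zero fun h0 => by
      have := one_lt_f hk3
      rw [h0, Nat.cast_zero] at hfn
      linarith
  have hpow := sq_sub_one_div_le_pow_of_f_le hk3 (by exact_mod_cast hfn)
  have hsteps : ∀ j, 2 ≤ j → j ≤ k → D (N + 1) (j - 1) < D (N + 1) j :=
    fun j => D_sub_one_lt_of_forall_le (by omega) fun i hi hik =>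
      mul_pow_le_mul_pow_of_sq_sub_one_div_le hi
        (sq_sub_one_div_le_pow_of_le (by exact_mod_cast hi) (by exact_mod_cast hik) hpow)
  have hkn := le_of_D_pos ((Nat.zero_le _).trans_lt (hsteps k (by omega) le_rfl))
  exact ⟨hsteps, le_M_of_forall_D_lt hkn (D_lt_of_forall_sub_one_lt (by omega) hsteps)⟩

end PaperStmt
end

section
/- Let G be a simple graph, n ≥ 1 a natural number, and S a finite set of vertices of G with |S| ≤ n. If Y(n, G[S]) ≥ D(n, M_n), where G[S] is the subgraph of G induced by S, then G[S] is a complete graph and |S| ≥ M_n; that is, S is a clique in G of size at least M_n. -/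
namespace PaperStmt

lemma Y_top_eq_D {W : Type*} [Fintype W] (n : ℕ) :
    Y n (⊤ : SimpleGraph W) = D n (Fintype.card W) := by
  classical
  let e := Fintype.equivFin W
  apply Nat.card_congr
  refine Equiv.subtypeEquiv (Equiv.arrowCongr (Equiv.refl (Fin n)) e) ?_
  intro w
  constructor
  · rintro ⟨h1, h2⟩
    refine ⟨fun i hi => ?_, (e.surjective).comp h2⟩
    simp only [SimpleGraph.top_adj, Function.comp_apply, ne_eq]
    exact fun hc => (h1 i hi).ne (e.injective hc)
  · rintro ⟨h1, h2⟩
    refine ⟨fun i hi => ?_, ?_⟩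
    · have := h1 i hi
      simp only [SimpleGraph.top_adj, Function.comp_apply, ne_eq] at this ⊢
      exact fun hc => this (congrArg e hc)
    · intro x
      obtain ⟨i, hi⟩ := h2 (e x)
      exact ⟨i, e.injective hi⟩

lemma Y_le_Y {W : Type*} [Fintype W] (n : ℕ) {H H' : SimpleGraph W} (hle : H ≤ H') :
    Y n H ≤ Y n H' := by
  classical
  apply Nat.card_le_card_of_injective
    (fun p => (⟨p.1, fun i hi => hle (p.2.1 i hi), p.2.2⟩ :
      {w : Fin n → W // IsWalk H' w ∧ Function.Surjective w}))
  intro p q hpq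
  exact Subtype.ext (congrArg Subtype.val hpq :)


lemma Y_lt_top {W : Type*} [Fintype W] {n : ℕ} (H : SimpleGraph W)
    {u v : W} (huv : u ≠ v) (hadj : ¬ H.Adj u v)
    (hkn : Fintype.card W ≤ n) :
    Y n H < Y n (⊤ : SimpleGraph W) := by
  classical
  set k := Fintype.card W with hk
  have hk2 : 2 ≤ k := Fintype.one_lt_card_iff_nontrivial.mpr ⟨u, v, huv⟩
  have ha : k - 2 < k := by omega
  have hb : k - 1 < k := by omega
  set a : Fin k := ⟨k - 2, ha⟩
  set b : Fin k := ⟨k - 1, hb⟩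
  have hab : a ≠ b := by
    simp only [a, b, Fin.mk.injEq, ne_eq]; omega
  -- build an equiv g : Fin k ≃ W with g a = u, g b = v
  let e : Fin k ≃ W := (Fintype.equivFin W).symm
  let g1 : Fin k ≃ W := (Equiv.swap a (e.symm u)).trans e
  have hg1a : g1 a = u := by simp [g1]
  let g2 : Fin k ≃ W := (Equiv.swap b (g1.symm v)).trans g1
  have hg2b : g2 b = v := by simp [g2]
  have hg2a : g2 a = u := by
    have h1 : a ≠ g1.symm v := by
      intro hc
      exact huv (by rw [hc, Equiv.apply_symm_apply] at hg1a; exact hg1a.symm ▸ rfl)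
    simp only [g2, Equiv.trans_apply]
    rw [Equiv.swap_apply_of_ne_of_ne hab h1, hg1a]
  set g := g2 with hg
  -- the witness walk
  let w0 : Fin n → W := fun i =>
    if h : (i : ℕ) < k then g ⟨i, h⟩ else if Even ((i : ℕ) - k) then u else v
  have hw0_lt : ∀ (i : Fin n) (h : (i : ℕ) < k), w0 i = g ⟨i, h⟩ := by
    intro i h; simp [w0, h]
  have hw0_ge : ∀ (i : Fin n), ¬ (i : ℕ) < k →
      w0 i = if Even ((i : ℕ) - k) then u else v := by
    intro i h; simp [w0, h]
  -- w0 is a surjective top-walk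
  have hwalk : IsWalk (⊤ : SimpleGraph W) w0 := by
    intro i hi
    rw [SimpleGraph.top_adj]
    by_cases h1 : i + 1 < k
    · have h0 : i < k := by omega
      rw [hw0_lt ⟨i, Nat.lt_of_succ_lt hi⟩ h0, hw0_lt ⟨i+1, hi⟩ h1]
      intro hc
      have := g.injective hc
      simp only [Fin.mk.injEq] at this
      omega
    · by_cases h0 : i < k
      · have hib : i = k - 1 := by omega
        have : (⟨i, h0⟩ : Fin k) = b := by simp [b, hib]
        rw [hw0_lt ⟨i, Nat.lt_of_succ_lt hi⟩ h0, this, hg2b,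
          hw0_ge ⟨i+1, hi⟩ (by simpa using h1)]
        have : i + 1 - k = 0 := by omega
        rw [this]
        simp [huv.symm]
      · rw [hw0_ge ⟨i, Nat.lt_of_succ_lt hi⟩ (by simpa using h0),
          hw0_ge ⟨i+1, hi⟩ (by simp; omega)]
        have hstep : i + 1 - k = (i - k) + 1 := by omega
        rw [hstep]
        rcases Nat.even_or_odd (i - k) with he | ho
        · simp [he, Nat.even_add_one, huv]
        · simp [Nat.not_even_iff_odd.symm.mp ho, Nat.even_add_one, huv.symm]
  have hsurj : Function.Surjective w0 := by
    intro x
    have hx : ((g.symm x : Fin k) : ℕ) < k := (g.symm x).2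
    refine ⟨⟨(g.symm x : Fin k), lt_of_lt_of_le hx hkn⟩, ?_⟩
    rw [hw0_lt _ hx]
    simp
  have hnotH : ¬ IsWalk H w0 := by
    intro hw
    have h1 : k - 2 + 1 < n := by omega
    have := hw (k - 2) h1
    have hlt1 : (k - 2 : ℕ) < k := ha
    have hlt2 : (k - 2 + 1 : ℕ) < k := by omega
    rw [hw0_lt _ hlt1, hw0_lt _ hlt2] at this
    have e1 : (⟨k - 2, hlt1⟩ : Fin k) = a := rfl
    have e2 : (⟨k - 2 + 1, hlt2⟩ : Fin k) = b := by simp [b]; omega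
    rw [e1, e2, hg2a, hg2b] at this
    exact hadj this
  -- strict count
  haveI : Fintype {w : Fin n → W // IsWalk H w ∧ Function.Surjective w} :=
    Fintype.ofFinite _
  haveI : Fintype {w : Fin n → W // IsWalk (⊤ : SimpleGraph W) w ∧ Function.Surjective w} :=
    Fintype.ofFinite _
  rw [Y, Y, Nat.card_eq_fintype_card, Nat.card_eq_fintype_card]
  refine Fintype.card_lt_of_injective_of_notMem
    (fun p => (⟨p.1, fun i hi => (SimpleGraph.top_adj _ _).mpr (p.2.1 i hi).ne, p.2.2⟩ :
      {w : Fin n → W // IsWalk (⊤ : SimpleGraph W) w ∧ Function.Surjective w}))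
    ?_ (b := ⟨w0, hwalk, hsurj⟩) ?_
  · intro p q hpq
    exact Subtype.ext (congrArg Subtype.val hpq :)
  · rintro ⟨p, hp⟩
    have : p.1 = w0 := congrArg Subtype.val hp
    exact hnotH (this ▸ p.2.1)


theorem clique_of_Y_ge {V : Type*} [Fintype V] (G : SimpleGraph V) (n : ℕ)
    (hn : 1 ≤ n) (S : Finset V) (hS : S.card ≤ n)
    (h : D n (M n) ≤ Y n (G.induce (S : Set V))) :
    G.IsClique (S : Set V) ∧ M n ≤ S.card := by
  classical
  have hcard : Fintype.card ↥(S : Set V) = S.card := by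
    rw [Fintype.card_eq_nat_card, Nat.card_coe_set_eq, Set.ncard_coe_finset]
  set sup := (Finset.range (n + 1)).sup (fun j => D n j) with hsupdef
  have hne : {k | k ≤ n ∧ D n k = sup}.Nonempty := by
    obtain ⟨j, hj, hjs⟩ := Finset.exists_mem_eq_sup (Finset.range (n + 1))
      ⟨0, by simp⟩ (fun j => D n j)
    exact ⟨j, Nat.lt_succ_iff.mp (Finset.mem_range.mp hj), hjs.symm⟩
  have hM : M n ≤ n ∧ D n (M n) = sup := Nat.sInf_mem hne
  have h1 : Y n (G.induce (S : Set V)) ≤ Y n (⊤ : SimpleGraph ↥(S : Set V)) :=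
    Y_le_Y n le_top
  have h2 : Y n (⊤ : SimpleGraph ↥(S : Set V)) = D n S.card := by
    rw [Y_top_eq_D, hcard]
  have h3 : D n S.card ≤ sup := Finset.le_sup (Finset.mem_range.mpr (by omega))
  have heq1 : Y n (G.induce (S : Set V)) = Y n (⊤ : SimpleGraph ↥(S : Set V)) := by
    omega
  have heq2 : D n S.card = sup := by omega
  constructor
  · by_contra hcl
    rw [SimpleGraph.isClique_iff, Set.Pairwise] at hcl
    push_neg at hcl
    obtain ⟨u, hu, v, hv, hne', hnadj⟩ := hcl
    have huv : (⟨u, hu⟩ : ↥(S : Set V)) ≠ ⟨v, hv⟩ := by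
      intro hc; exact hne' (congrArg Subtype.val hc)
    have hnadj' : ¬ (G.induce (S : Set V)).Adj ⟨u, hu⟩ ⟨v, hv⟩ := by
      simpa using hnadj
    have hlt := Y_lt_top (G.induce (S : Set V)) huv hnadj' (le_of_eq_of_le hcard hS)
    omega
  · exact Nat.sInf_le ⟨hS, by omega⟩

end PaperStmt
end
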